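/- arXiv:2011.09093 — 3 statements merged into one kernel-verified Lean document; each statement's English description precedes it below -/
import Mathlib

section
/- For any constant 0 < ε ≤ 1/8 and any n ∈ ℕ, there exists a matrix A ∈ F^{n×n} over a finite field F that is an (εn, εn)-rigid matrix, i.e., A cannot be written as A = B + C where B has rank at most εn and C has at most εn non-zero entries in each row. -/
/-- A matrix `A` is `(r, s)`-rigid if it cannot be written as `A = B + C` where `B` has
rank at most `r` and `C` has at most `s` non-zero entries in each row. -/
def IsRigidMatrix {F : Type*} [Field F] [DecidableEq F] {n : ℕ}
    (A : Matrix (Fin n) (Fin n) F) (r s : ℝ) : Prop :=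
  ¬ ∃ B C : Matrix (Fin n) (Fin n) F, A = B + C ∧ (B.rank : ℝ) ≤ r ∧
      ∀ i, ((Finset.univ.filter fun j => C i j ≠ 0).card : ℝ) ≤ s

/-!
A matrix `B + C` with `rank B ≤ r` and at most `s` nonzero entries in each row of `C`
is determined by a factorization `B = P * Q` through `F ^ r` together with the support and the
nonzero values of each row of `C`. Over a field with `q` elements this leaves at most
`q ^ (2 r n) * (N * q ^ s) ^ n` such `n × n` matrices, where `N = ∑_{k ≤ s} (n choose k)`
satisfies `N * 7 ^ (n - s) ≤ 8 ^ n`. For `r, s ≤ n / 8` the count is below `q ^ (n * n)`, the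
number of all matrices, so some matrix is rigid.
-/

open Matrix Finset

theorem Matrix.exists_mul_eq_of_rank_le {F m n : Type*} [Field F] [Fintype n] {r : ℕ}
    (B : Matrix m n F) (h : B.rank ≤ r) :
    ∃ (P : Matrix m (Fin r) F) (Q : Matrix (Fin r) n F), P * Q = B := by
  have := FiniteDimensional.span_of_finite F (Set.finite_range B.col)
  obtain ⟨g, -, hg, -⟩ := Submodule.exists_fun_fin_finrank_span_eq F (Set.range B.col)
  have hd : Module.finrank F (Submodule.span F (Set.range B.col)) ≤ r :=
    B.rank_eq_finrank_span_cols ▸ h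
  let f : Fin r → m → F := Function.extend (Fin.castLE hd) g 0
  have hgf : Set.range g ⊆ Set.range f := by
    rintro _ ⟨k, rfl⟩
    exact ⟨Fin.castLE hd k, (Fin.castLE_injective hd).extend_apply g 0 k⟩
  have hcol (j : n) : B.col j ∈ Submodule.span F (Set.range f) := by
    refine Submodule.span_mono hgf ?_
    rw [hg]
    exact Submodule.subset_span ⟨j, rfl⟩
  choose c hc using fun j => (Submodule.mem_span_range_iff_exists_fun F).mp (hcol j)
  refine ⟨of fun i k => f k i, of fun k j => c j k, ?_⟩
  ext i j
  simpa [mul_apply, mul_comm] using congrFun (hc j) i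

theorem Fintype.card_matrix {F m n : Type*} [Fintype F] [Fintype m] [Fintype n] [DecidableEq m]
    [DecidableEq n] :
    Fintype.card (Matrix m n F) = Fintype.card F ^ (Fintype.card m * Fintype.card n) := by
  change Fintype.card (m → n → F) = _
  rw [Fintype.card_fun, Fintype.card_fun, ← pow_mul, mul_comm]

theorem Matrix.card_filter_rank_le {F m n : Type*} [Field F] [Fintype F] [Fintype m] [Fintype n]
    [DecidableEq m] [DecidableEq n] [DecidableEq F] (r : ℕ) :
    #{B : Matrix m n F | B.rank ≤ r}
      ≤ Fintype.card F ^ (Fintype.card m * r) * Fintype.card F ^ (r * Fintype.card n) := by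
  have hsub : ({B : Matrix m n F | B.rank ≤ r} : Finset _) ⊆
      image₂ (fun (P : Matrix m (Fin r) F) (Q : Matrix (Fin r) n F) => P * Q) univ univ := by
    intro B hB
    obtain ⟨P, Q, rfl⟩ := B.exists_mul_eq_of_rank_le (mem_filter.mp hB).2
    exact mem_image₂_of_mem (mem_univ P) (mem_univ Q)
  calc _ ≤ _ := card_le_card hsub
    _ ≤ _ := card_image₂_le _ _ _
    _ = _ := by simp only [card_univ, Fintype.card_matrix, Fintype.card_fin]

theorem Finset.card_filter_card_le_le_sum_choose {α : Type*} [Fintype α] [DecidableEq α]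
    (s : ℕ) : #{t : Finset α | #t ≤ s} ≤ ∑ k ∈ range (s + 1), (Fintype.card α).choose k := by
  have hsub : ({t : Finset α | #t ≤ s} : Finset _) ⊆
      (range (s + 1)).biUnion (powersetCard · univ) := by
    intro t ht
    simp only [mem_filter, mem_biUnion, mem_range, mem_powersetCard] at ht ⊢
    exact ⟨#t, by omega, subset_univ t, rfl⟩
  calc _ ≤ _ := card_le_card hsub
    _ ≤ _ := card_biUnion_le
    _ = _ := by simp only [card_powersetCard, card_univ]

theorem card_filter_forall_notMem_eq_zero_le {F α : Type*} [Fintype F] [Fintype α]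
    [DecidableEq α] [DecidableEq F] [Zero F] (t : Finset α) :
    #{v : α → F | ∀ j ∉ t, v j = 0} ≤ Fintype.card F ^ #t := by
  calc _ ≤ #(univ : Finset (t → F)) := by
        refine card_le_card_of_injOn (fun v j => v j) (fun _ _ => mem_univ _) ?_
        intro v hv w hw hvw
        simp only [coe_filter, Set.mem_ofPred_eq, mem_univ, true_and] at hv hw
        funext j
        by_cases hj : j ∈ t
        · exact congrFun hvw ⟨j, hj⟩
        · rw [hv j hj, hw j hj]
    _ = _ := by simp

theorem card_filter_card_support_le {F α : Type*} [Fintype F] [Fintype α] [DecidableEq α]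
    [DecidableEq F] [Zero F] (s : ℕ) :
    #{v : α → F | #{j | v j ≠ 0} ≤ s}
      ≤ (∑ k ∈ range (s + 1), (Fintype.card α).choose k) * Fintype.card F ^ s := by
  have hsub : ({v : α → F | #{j | v j ≠ 0} ≤ s} : Finset _) ⊆
      ({t : Finset α | #t ≤ s} : Finset _).biUnion fun t => {v : α → F | ∀ j ∉ t, v j = 0} := by
    intro v hv
    simp only [mem_filter, mem_univ, true_and, mem_biUnion] at hv ⊢
    exact ⟨_, hv, fun j hj => by simpa using hj⟩
  calc _ ≤ _ := card_le_card hsub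
    _ ≤ _ := card_biUnion_le
    _ ≤ ∑ _t ∈ ({t : Finset α | #t ≤ s} : Finset _), Fintype.card F ^ s := by
        refine sum_le_sum fun t ht => (card_filter_forall_notMem_eq_zero_le t).trans ?_
        exact Nat.pow_le_pow_right Fintype.card_pos (mem_filter.mp ht).2
    _ ≤ _ := by
        rw [sum_const, smul_eq_mul]
        exact Nat.mul_le_mul_right _ (card_filter_card_le_le_sum_choose s)

theorem Matrix.card_filter_forall_card_support_row_le {F m n : Type*} [Fintype F] [Fintype m]
    [Fintype n] [DecidableEq m] [DecidableEq n] [DecidableEq F] [Zero F] (s : ℕ) :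
    #{C : Matrix m n F | ∀ i, #{j | C i j ≠ 0} ≤ s}
      ≤ ((∑ k ∈ range (s + 1), (Fintype.card n).choose k) * Fintype.card F ^ s)
        ^ Fintype.card m := by
  calc _ ≤ #(Fintype.piFinset fun _ : m => ({v : n → F | #{j | v j ≠ 0} ≤ s} : Finset _)) := by
        refine card_le_card_of_injOn of.symm (fun C hC => ?_) of.symm.injective.injOn
        rw [mem_coe, mem_filter] at hC
        rw [mem_coe, Fintype.mem_piFinset]
        exact fun i => mem_filter.mpr ⟨mem_univ _, hC.2 i⟩
    _ ≤ _ := by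
        rw [Fintype.card_piFinset, prod_const, card_univ]
        exact Nat.pow_le_pow_left (card_filter_card_support_le s) _

theorem Nat.sum_range_choose_mul_pow_le {a n s : ℕ} (ha : 1 ≤ a) (hs : s ≤ n) :
    (∑ k ∈ range (s + 1), n.choose k) * a ^ (n - s) ≤ (a + 1) ^ n := by
  calc _ = ∑ k ∈ range (s + 1), n.choose k * a ^ (n - s) := sum_mul ..
    _ ≤ ∑ k ∈ range (s + 1), n.choose k * a ^ (n - k) := by
        refine sum_le_sum fun k hk => Nat.mul_le_mul_left _ (Nat.pow_le_pow_right ha ?_)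
        have := mem_range.mp hk
        omega
    _ ≤ ∑ k ∈ range (n + 1), n.choose k * a ^ (n - k) :=
        sum_le_sum_of_subset (range_subset_range.mpr (by omega))
    _ = (a + 1) ^ n := by
        rw [add_comm a 1, add_pow]
        exact sum_congr rfl fun k _ => by rw [one_pow, one_mul, Nat.cast_id, mul_comm]

theorem eight_pow_lt_two_pow_mul_seven_pow {n r s : ℕ} (hn : 0 < n) (hr : 8 * r ≤ n)
    (hs : 8 * s ≤ n) : 8 ^ n < 2 ^ (n - 2 * r - s) * 7 ^ (n - s) := by
  refine lt_of_pow_lt_pow_left₀ 8 (by positivity) ?_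
  calc (8 ^ n) ^ 8 = (8 ^ 8) ^ n := by rw [← pow_mul, ← pow_mul, mul_comm]
    _ < (2 ^ 5 * 7 ^ 7) ^ n := Nat.pow_lt_pow_left (by norm_num) hn.ne'
    _ = 2 ^ (5 * n) * 7 ^ (7 * n) := by rw [mul_pow, ← pow_mul, ← pow_mul]
    _ ≤ 2 ^ (8 * (n - 2 * r - s)) * 7 ^ (8 * (n - s)) :=
        Nat.mul_le_mul (Nat.pow_le_pow_right (by norm_num) (by omega))
          (Nat.pow_le_pow_right (by norm_num) (by omega))
    _ = (2 ^ (n - 2 * r - s) * 7 ^ (n - s)) ^ 8 := by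
        rw [mul_pow, ← pow_mul, ← pow_mul, mul_comm 8, mul_comm 8]

theorem Nat.pow_mul_pow_mul_pow_lt_pow_mul_self {q n r s N : ℕ} (hq : 2 ≤ q) (hn : 0 < n)
    (hr : 8 * r ≤ n) (hs : 8 * s ≤ n) (hN : N * 7 ^ (n - s) ≤ 8 ^ n) :
    q ^ (n * r) * q ^ (r * n) * (N * q ^ s) ^ n < q ^ (n * n) := by
  have hN' : N < 2 ^ (n - 2 * r - s) :=
    Nat.lt_of_mul_lt_mul_right (hN.trans_lt (eight_pow_lt_two_pow_mul_seven_pow hn hr hs))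
  have hrow : N * q ^ s < q ^ (n - 2 * r) :=
    calc N * q ^ s < 2 ^ (n - 2 * r - s) * q ^ s := by gcongr
      _ ≤ q ^ (n - 2 * r - s) * q ^ s := by gcongr
      _ = q ^ (n - 2 * r) := by rw [← pow_add]; congr 1; omega
  calc q ^ (n * r) * q ^ (r * n) * (N * q ^ s) ^ n
      < q ^ (n * r) * q ^ (r * n) * (q ^ (n - 2 * r)) ^ n := by gcongr
    _ = q ^ (n * n) := by
        rw [← pow_mul, ← pow_add, ← pow_add]
        congr 1
        have : 2 * r ≤ n := by omega
        zify [this]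
        ring

theorem Matrix.exists_not_lowRank_add_rowSparse {F m : Type*} [Field F] [Fintype F]
    [DecidableEq F] [Fintype m] [DecidableEq m] {r s : ℕ} (hm : 0 < Fintype.card m)
    (hr : 8 * r ≤ Fintype.card m) (hs : 8 * s ≤ Fintype.card m) :
    ∃ A : Matrix m m F, ¬ ∃ B C, A = B + C ∧ B.rank ≤ r ∧ ∀ i, #{j | C i j ≠ 0} ≤ s := by
  set n := Fintype.card m
  by_contra! hall
  have hcover : (univ : Finset (Matrix m m F)) ⊆ image₂ (· + ·) {B : Matrix m m F | B.rank ≤ r}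
      {C : Matrix m m F | ∀ i, #{j | C i j ≠ 0} ≤ s} := by
    intro A _
    obtain ⟨B, C, rfl, hB, hC⟩ := hall A
    exact mem_image₂_of_mem (by simpa using hB) (by simpa using hC)
  have hcard := calc
    Fintype.card F ^ (n * n) = #(univ : Finset (Matrix m m F)) := by
      rw [card_univ, Fintype.card_matrix]
    _ ≤ _ := (card_le_card hcover).trans (card_image₂_le _ _ _)
    _ ≤ _ := Nat.mul_le_mul (card_filter_rank_le r) (card_filter_forall_card_support_row_le s)
  have hN : (∑ k ∈ range (s + 1), n.choose k) * 7 ^ (n - s) ≤ 8 ^ n :=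
    Nat.sum_range_choose_mul_pow_le (by norm_num) (by omega)
  exact hcard.not_gt (Nat.pow_mul_pow_mul_pow_lt_pow_mul_self Fintype.one_lt_card hm hr hs hN)

theorem stmt_0_general {F : Type*} [Field F] [Fintype F] [DecidableEq F]
    (ε : ℝ) (hε' : ε ≤ 1 / 8) (n : ℕ) (hn : 0 < n) :
    ∃ A : Matrix (Fin n) (Fin n) F, IsRigidMatrix A (ε * n) (ε * n) := by
  have hr : 8 * ⌊ε * n⌋₊ ≤ n := by
    have hεn : ε * n ≤ (n : ℝ) / (8 : ℕ) := by
      push_cast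
      nlinarith [n.cast_nonneg (α := ℝ)]
    have := (Nat.floor_le_floor hεn).trans_eq (Nat.floor_div_eq_div n 8)
    omega
  obtain ⟨A, hA⟩ := Matrix.exists_not_lowRank_add_rowSparse (F := F) (m := Fin n)
    (by simpa using hn) (by simpa using hr) (by simpa using hr)
  exact ⟨A, fun ⟨B, C, hBC, hB, hC⟩ =>
    hA ⟨B, C, hBC, Nat.le_floor hB, fun i => Nat.le_floor (hC i)⟩⟩

theorem stmt_0 {F : Type*} [Field F] [Fintype F] [DecidableEq F]
    (ε : ℝ) (hε : 0 < ε) (hε' : ε ≤ 1 / 8) (n : ℕ) (hn : 0 < n) :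
    ∃ A : Matrix (Fin n) (Fin n) F, IsRigidMatrix A (ε * n) (ε * n) :=
  stmt_0_general ε hε' n hn
end

section
/- For every constant 0 < ε ≤ 1/8 and every sufficiently large n (in particular n ≥ 2/ε), there exists a function f : {0,1}^n → {0,1}^n that is an (εn, εn)-rigid function. -/
/-!
A counting argument. Put `s = ⌊εn⌋` and `m = 2^(n-s-1) ≤ 2^(n-εn)`. A function that is not
rigid agrees on some `m` inputs with a circuit `x ↦ (Tᵢ (x ∘ ρᵢ))ᵢ` whose `i`-th output reads
`s` input bits through `ρᵢ : Fin s → Fin n`. There are `(n^s)^n · (2^(2^s))^n < m!` circuits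
(this is where `8s ≤ n` is needed), and a circuit with an `m`-set of inputs fixes `f` on that set,
so at most `#circuits · C(2^n, m) · (2^n)^(2^n - m) < (2^n)^(2^n)` functions are not rigid.
-/

/-- `f : {0,1}^n → {0,1}^n` is an `(r, s)`-rigid function: for every subset `X` of size at
least `2^(n-r)`, every choice of subsets `S₁, …, Sₙ ⊆ [n]` of size (at most) `s`, and every
choice of functions `g₁, …, gₙ` where `gᵢ` depends only on the coordinates in `Sᵢ`, there is
`x ∈ X` with `f x ≠ (g₁(x|_{S₁}), …, gₙ(x|_{Sₙ}))`. -/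
def IsRigidFunc (n : ℕ) (f : (Fin n → Bool) → Fin n → Bool) (r s : ℝ) : Prop :=
  ∀ X : Finset (Fin n → Bool), (2 : ℝ) ^ ((n : ℝ) - r) ≤ X.card →
    ∀ S : Fin n → Finset (Fin n), (∀ i, ((S i).card : ℝ) ≤ s) →
      ∀ g : Fin n → (Fin n → Bool) → Bool,
        (∀ i x y, (∀ j ∈ S i, x j = y j) → g i x = g i y) →
        ∃ x ∈ X, f x ≠ fun i => g i x

open Finset
open scoped Nat

lemma cube_add_mul_two_pow_le {s : ℕ} (hs : 2 ≤ s) :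
    64 * s ^ 3 + 8 * s * 2 ^ s ≤ 2 ^ (7 * s - 2) := by
  induction s, hs using Nat.le_induction with
  | base => norm_num
  | succ s hs ih =>
    have hcube : (s + 1) ^ 3 ≤ 8 * s ^ 3 :=
      calc (s + 1) ^ 3 ≤ (2 * s) ^ 3 := Nat.pow_le_pow_left (by omega) 3
        _ = 8 * s ^ 3 := by ring
    have hexp : 8 * (s + 1) * 2 ^ (s + 1) ≤ 4 * (8 * s * 2 ^ s) :=
      calc 8 * (s + 1) * 2 ^ (s + 1) = 16 * (s + 1) * 2 ^ s := by ring
        _ ≤ 32 * s * 2 ^ s := Nat.mul_le_mul_right _ (by omega)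
        _ = 4 * (8 * s * 2 ^ s) := by ring
    rw [show 7 * (s + 1) - 2 = 7 * s - 2 + 7 by omega, pow_add 2 (7 * s - 2) 7]
    omega

lemma sq_mul_add_mul_two_pow_le {s n : ℕ} (hs : 2 ≤ s) (hn : 8 * s ≤ n) :
    n ^ 2 * s + n * 2 ^ s ≤ 2 ^ (n - s - 2) := by
  induction n, hn using Nat.le_induction with
  | base =>
    have := cube_add_mul_two_pow_le hs
    rw [show 8 * s - s - 2 = 7 * s - 2 by omega]
    nlinarith
  | succ n hn ih =>
    have hsq : (2 * n + 1) * s ≤ n ^ 2 * s := Nat.mul_le_mul_right s (by nlinarith)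
    have hpow : 2 ^ s ≤ n * 2 ^ s := Nat.le_mul_of_pos_left _ (by omega)
    have hstep : (n + 1) ^ 2 * s + (n + 1) * 2 ^ s ≤ 2 * (n ^ 2 * s + n * 2 ^ s) := by
      nlinarith
    rw [show n + 1 - s - 2 = n - s - 2 + 1 by omega, pow_succ 2 (n - s - 2)]
    omega

lemma two_pow_two_pow_lt_factorial {d : ℕ} (hd : 1 ≤ d) : 2 ^ 2 ^ d < (2 ^ (d + 1))! := by
  have h2 : 2 < 2 ^ d + 1 := by have := Nat.one_lt_two_pow (n := d) (by omega); omega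
  rw [pow_succ, mul_two]
  exact (Nat.pow_lt_pow_left h2 (by positivity)).trans_le
    ((Nat.le_mul_of_pos_left _ (Nat.factorial_pos _)).trans Nat.factorial_mul_pow_le_factorial)

lemma pow_mul_pow_lt_factorial {n s : ℕ} (hs : 2 ≤ s) (hn : 8 * s ≤ n) :
    (n ^ s) ^ n * (2 ^ 2 ^ s) ^ n < (2 ^ (n - s - 1))! := by
  have hbase : (n ^ s) ^ n ≤ 2 ^ (n ^ 2 * s) :=
    calc (n ^ s) ^ n ≤ ((2 ^ n) ^ s) ^ n :=
          Nat.pow_le_pow_left (Nat.pow_le_pow_left Nat.lt_two_pow_self.le s) n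
      _ = 2 ^ (n ^ 2 * s) := by rw [← pow_mul, ← pow_mul]; ring_nf
  calc (n ^ s) ^ n * (2 ^ 2 ^ s) ^ n ≤ 2 ^ (n ^ 2 * s) * 2 ^ (n * 2 ^ s) := by
        rw [← pow_mul 2 (2 ^ s) n, mul_comm (2 ^ s)]; exact Nat.mul_le_mul_right _ hbase
    _ = 2 ^ (n ^ 2 * s + n * 2 ^ s) := (pow_add 2 _ _).symm
    _ ≤ 2 ^ 2 ^ (n - s - 2) := Nat.pow_le_pow_right two_pos (sq_mul_add_mul_two_pow_le hs hn)
    _ < (2 ^ (n - s - 2 + 1))! := two_pow_two_pow_lt_factorial (by omega)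
    _ = (2 ^ (n - s - 1))! := by rw [show n - s - 2 + 1 = n - s - 1 by omega]

lemma mul_choose_lt_pow_of_lt_factorial {k m N : ℕ} (hk : k < m !) (hm : m ≤ N) :
    k * N.choose m < N ^ m :=
  calc k * N.choose m < m ! * N.choose m := Nat.mul_lt_mul_of_pos_right hk (Nat.choose_pos hm)
    _ = N.descFactorial m := (Nat.descFactorial_eq_factorial_mul_choose N m).symm
    _ ≤ N ^ m := Nat.descFactorial_le_pow N m

section RandomFunction

variable {ι α β : Type*} [Fintype ι] [Fintype α] [Fintype β] [DecidableEq α] [DecidableEq β]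

lemma card_filter_forall_mem_eq_mul_pow_le (g : α → β) (A : Finset α) :
    #{f : α → β | ∀ x ∈ A, f x = g x} * Fintype.card β ^ #A ≤
      Fintype.card β ^ Fintype.card α := by
  have hinj : #{f : α → β | ∀ x ∈ A, f x = g x} ≤ Fintype.card ({x // x ∉ A} → β) := by
    refine card_le_card_of_injOn (fun f x => f x.1) (fun _ _ => mem_coe.2 (mem_univ _)) ?_
    intro f hf f' hf' hff'
    simp only [coe_filter, mem_univ, true_and, Set.mem_ofPred_eq] at hf hf'
    funext x
    by_cases hx : x ∈ A
    · rw [hf x hx, hf' x hx]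
    · exact congrFun hff' ⟨x, hx⟩
  have hcompl : Fintype.card ({x // x ∉ A} → β) = Fintype.card β ^ (Fintype.card α - #A) := by
    rw [Fintype.card_fun, Fintype.card_subtype_compl, Fintype.card_coe]
  calc _ ≤ Fintype.card β ^ (Fintype.card α - #A) * Fintype.card β ^ #A :=
        Nat.mul_le_mul_right _ (hcompl ▸ hinj)
    _ = Fintype.card β ^ Fintype.card α := by
        rw [← pow_add, Nat.sub_add_cancel (card_le_univ A)]

theorem exists_forall_card_filter_eq_lt [Nonempty β] (F : ι → α → β) {m : ℕ}
    (h : Fintype.card ι * (Fintype.card α).choose m < Fintype.card β ^ m) :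
    ∃ f : α → β, ∀ i, #{x | f x = F i x} < m := by
  by_contra! hall
  set Agree : ι × Finset α → Finset (α → β) := fun p => {f | ∀ x ∈ p.2, f x = F p.1 x}
  have hcover : (univ : Finset (α → β)) ⊆ (univ ×ˢ powersetCard m univ).biUnion Agree := by
    intro f _
    obtain ⟨i, hi⟩ := hall f
    obtain ⟨A, hA, hAcard⟩ := exists_subset_card_eq hi
    refine mem_biUnion.2 ⟨(i, A),
      mem_product.2 ⟨mem_univ _, mem_powersetCard.2 ⟨subset_univ _, hAcard⟩⟩, ?_⟩
    simpa [Agree] using fun x hx => (mem_filter.1 (hA hx)).2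
  have hsmall : ∀ p ∈ univ ×ˢ powersetCard m univ,
      #(Agree p) * Fintype.card β ^ m ≤ Fintype.card β ^ Fintype.card α := by
    rintro ⟨i, A⟩ hp
    rw [← (mem_powersetCard.1 (mem_product.1 hp).2).2]
    exact card_filter_forall_mem_eq_mul_pow_le _ A
  have hcount := calc Fintype.card β ^ Fintype.card α * Fintype.card β ^ m
      = #(univ : Finset (α → β)) * Fintype.card β ^ m := by rw [card_univ, Fintype.card_fun]
    _ ≤ (∑ p ∈ univ ×ˢ powersetCard m univ, #(Agree p)) * Fintype.card β ^ m :=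
        Nat.mul_le_mul_right _ ((card_le_card hcover).trans card_biUnion_le)
    _ ≤ ∑ _p ∈ univ ×ˢ powersetCard m univ, Fintype.card β ^ Fintype.card α := by
        rw [sum_mul]; exact sum_le_sum hsmall
    _ = Fintype.card ι * (Fintype.card α).choose m * Fintype.card β ^ Fintype.card α := by
        rw [sum_const, card_product, card_powersetCard, card_univ, card_univ, smul_eq_mul]
  have hpos : 0 < Fintype.card β ^ Fintype.card α := by positivity
  exact (Nat.mul_lt_mul_of_pos_right h hpos).not_ge ((mul_comm _ _).trans_le hcount)

end RandomFunction

lemma exists_eq_comp_fin_of_forall_mem_eq {α β γ : Type*} [Nonempty α] [Inhabited β]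
    {S : Finset α} {s : ℕ} (hS : #S ≤ s) {g : (α → β) → γ}
    (hg : ∀ x y, (∀ j ∈ S, x j = y j) → g x = g y) :
    ∃ (ρ : Fin s → α) (T : (Fin s → β) → γ), ∀ x, g x = T (x ∘ ρ) := by
  let ρ : Fin s → α := fun k => S.toList.getD k (Classical.arbitrary α)
  have hρ : ∀ j ∈ S, ∃ k, ρ k = j := by
    intro j hj
    obtain ⟨k, hk, rfl⟩ := List.mem_iff_getElem.1 (mem_toList.2 hj)
    exact ⟨⟨k, hk.trans_le ((length_toList S).trans_le hS)⟩, List.getD_eq_getElem _ _ hk⟩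
  refine ⟨ρ, fun t => g (Function.extend ρ t default), fun x => hg _ _ fun j hj => ?_⟩
  obtain ⟨k, rfl⟩ := hρ j hj
  exact (Function.FactorsThrough.extend_apply (fun _ _ h => congrArg x h) _ k).symm

theorem isRigidFunc_of_forall_card_filter_lt {n m : ℕ} [NeZero n]
    {f : (Fin n → Bool) → Fin n → Bool} {r t : ℝ}
    (hf : ∀ (ρ : Fin n → Fin ⌊t⌋₊ → Fin n) (T : Fin n → (Fin ⌊t⌋₊ → Bool) → Bool),
      #{x | f x = fun i => T i (x ∘ ρ i)} < m)
    (hm : (m : ℝ) ≤ 2 ^ ((n : ℝ) - r)) : IsRigidFunc n f r t := by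
  intro X hX S hS g hg
  choose ρ T hρT using fun i => exists_eq_comp_fin_of_forall_mem_eq (Nat.le_floor (hS i)) (hg i)
  by_contra! hX_agree
  have hsub : X ⊆ ({x | f x = fun i => T i (x ∘ ρ i)} : Finset _) := fun x hx =>
    mem_filter.2 ⟨mem_univ x, (hX_agree x hx).trans (funext fun i => hρT i x)⟩
  refine lt_irrefl (#X : ℝ) ?_
  calc (#X : ℝ) ≤ #{x | f x = fun i => T i (x ∘ ρ i)} := by exact_mod_cast card_le_card hsub
    _ < m := by exact_mod_cast hf ρ T
    _ ≤ #X := hm.trans hX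

theorem exists_forall_card_filter_eq_comp_lt {n s : ℕ} (hs : 2 ≤ s) (hn : 8 * s ≤ n) :
    ∃ f : (Fin n → Bool) → Fin n → Bool,
      ∀ (ρ : Fin n → Fin s → Fin n) (T : Fin n → (Fin s → Bool) → Bool),
        #{x | f x = fun i => T i (x ∘ ρ i)} < 2 ^ (n - s - 1) := by
  let F : (Fin n → Fin s → Fin n) × (Fin n → (Fin s → Bool) → Bool) →
      (Fin n → Bool) → Fin n → Bool := fun p x i => p.2 i (x ∘ p.1 i)
  have hcard : Fintype.card ((Fin n → Fin s → Fin n) × (Fin n → (Fin s → Bool) → Bool))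
      < (2 ^ (n - s - 1))! := by
    simpa [Fintype.card_prod, Fintype.card_fun] using pow_mul_pow_lt_factorial hs hn
  obtain ⟨f, hf⟩ := exists_forall_card_filter_eq_lt F <| by
    simpa [Fintype.card_fun] using mul_choose_lt_pow_of_lt_factorial hcard
      (Nat.pow_le_pow_right two_pos (by omega) : 2 ^ (n - s - 1) ≤ 2 ^ n)
  exact ⟨f, fun ρ T => hf (ρ, T)⟩

theorem stmt_3 (ε : ℝ) (hε : 0 < ε) (hε' : ε ≤ 1 / 8) (n : ℕ) (hn : 2 / ε ≤ n) :
    ∃ f : (Fin n → Bool) → Fin n → Bool, IsRigidFunc n f (ε * n) (ε * n) := by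
  have hεn : 2 ≤ ε * n := by rwa [div_le_iff₀ hε, mul_comm] at hn
  set s := ⌊ε * n⌋₊
  have hs : 2 ≤ s := Nat.le_floor (by exact_mod_cast hεn)
  have hsn : 8 * s ≤ n := by
    have : (8 * s : ℝ) ≤ n := by nlinarith [Nat.floor_le (by positivity : 0 ≤ ε * n)]
    exact_mod_cast this
  have : NeZero n := ⟨by omega⟩
  obtain ⟨f, hf⟩ := exists_forall_card_filter_eq_comp_lt hs hsn
  refine ⟨f, isRigidFunc_of_forall_card_filter_lt hf ?_⟩
  rw [Nat.cast_pow, Nat.cast_ofNat, ← Real.rpow_natCast]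
  refine Real.rpow_le_rpow_of_exponent_le one_le_two ?_
  rw [Nat.cast_sub (by omega), Nat.cast_sub (by omega)]
  push_cast
  linarith [Nat.lt_floor_add_one (ε * n)]
end

section
/- For every n ≥ 2/ε with 0 < ε ≤ 1/8, the number of functions f : {0,1}^n → {0,1}^n that are not (εn, εn)-rigid functions is strictly less than 2^{n·2^n}, the total number of such functions; moreover, this count is at most (2^{(n/4)·2^{n−εn}})^3 · 2^{n·2^n − n·2^{n−εn}}. -/
/-! A function that is not rigid agrees, on some set `X` of `⌈2^(n-εn)⌉` inputs, with a map whose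
`i`-th output bit reads only `⌊εn⌋` input bits. It is therefore determined by `X`, its values off
`X`, the coordinate sets `S i` and the truth tables `g i`. Counting these codes, with
`C(N, m) ≤ (eN/m)^m` for the choice of `X`, gives the bound; it is below `2^(n 2^n)` because the
three small factors cost at most `(3/4) n 2^(n-εn)` bits, while fixing `f` on `X` saves
`n 2^(n-εn)`. -/

open Finset Real Nat

-- `g i` is stored as a truth table on the bits of `S i`, read in increasing order.
abbrev NonRigidCode (n m k : ℕ) : Type :=
  (Σ X : {X : Finset (Fin n → Bool) // X.card = m}, ({x // x ∉ X.1} → Fin n → Bool)) ×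
    (Fin n → {S : Finset (Fin n) // S.card = k}) × (Fin n → (Fin k → Bool) → Bool)

namespace NonRigidCode

variable {n m k : ℕ}

def decode (c : NonRigidCode n m k) : (Fin n → Bool) → Fin n → Bool :=
  let ⟨⟨X, f⟩, S, g⟩ := c
  fun x => if hx : x ∈ X.1 then fun i => g i (x ∘ (S i).1.orderEmbOfFin (S i).2) else f ⟨x, hx⟩

theorem card_eq :
    Nat.card (NonRigidCode n m k) =
      (2 ^ n).choose m * (2 ^ n) ^ (2 ^ n - m) * ((n.choose k) ^ n * (2 ^ 2 ^ k) ^ n) := by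
  have hX (X : {X : Finset (Fin n → Bool) // X.card = m}) : #X.1 = m := X.2
  simp [Nat.card_eq_fintype_card, Fintype.card_sigma, Fintype.card_subtype_compl,
    Fintype.card_finset_len, mul_assoc, hX]

theorem exists_decode_eq {r s : ℝ} (hm : m ≤ ⌈(2 : ℝ) ^ ((n : ℝ) - r)⌉₊) (hk : ⌊s⌋₊ ≤ k)
    (hkn : k ≤ n) {f : (Fin n → Bool) → Fin n → Bool} (hf : ¬ IsRigidFunc n f r s) :
    ∃ c : NonRigidCode n m k, c.decode = f := by
  simp only [IsRigidFunc, not_forall, not_exists, not_and, not_not] at hf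
  obtain ⟨X, hX, S, hS, g, hg, hfg⟩ := hf
  obtain ⟨X', hX'X, hX'⟩ := exists_subset_card_eq (hm.trans (Nat.ceil_le.2 hX))
  have hS' (i : Fin n) : ∃ T : Finset (Fin n), S i ⊆ T ∧ T.card = k :=
    exists_superset_card_eq ((Nat.le_floor (hS i)).trans hk) (by simpa using hkn)
  choose T hST hT using hS'
  refine ⟨⟨⟨⟨X', hX'⟩, fun x => f x⟩, fun i => ⟨T i, hT i⟩,
    fun i z => g i fun j => if hj : j ∈ T i then z (((T i).orderIsoOfFin (hT i)).symm ⟨j, hj⟩)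
      else false⟩, ?_⟩
  funext x
  by_cases hx : x ∈ X'
  · simp only [decode, dif_pos hx, hfg x (hX'X hx)]
    funext i
    refine hg i _ x fun j hj => ?_
    simp [dif_pos (hST i hj), ← coe_orderIsoOfFin_apply]
  · simp only [decode, dif_neg hx]

end NonRigidCode

theorem card_not_isRigidFunc_le (n : ℕ) (r s : ℝ) (hs : ⌊s⌋₊ ≤ n) :
    Nat.card {f : (Fin n → Bool) → Fin n → Bool // ¬ IsRigidFunc n f r s} ≤
      Nat.card (NonRigidCode n ⌈(2 : ℝ) ^ ((n : ℝ) - r)⌉₊ ⌊s⌋₊) := by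
  choose c hc using fun f : {f // ¬ IsRigidFunc n f r s} =>
    NonRigidCode.exists_decode_eq le_rfl le_rfl hs f.2
  exact Nat.card_le_card_of_injective c fun f g hfg => Subtype.ext (by rw [← hc f, ← hc g, hfg])

theorem Nat.choose_le_mul_exp_one_div_pow (N m : ℕ) :
    (N.choose m : ℝ) ≤ (N * exp 1 / m) ^ m := by
  rcases m.eq_zero_or_pos with rfl | hm
  · simp
  have hfact : (m : ℝ) ^ m ≤ exp 1 ^ m * m ! := by
    rw [← exp_nat_mul, mul_one, ← div_le_iff₀ (by positivity)]
    exact pow_div_factorial_le_exp _ m.cast_nonneg m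
  calc (N.choose m : ℝ) ≤ N ^ m / m ! := Nat.choose_le_pow_div m N
    _ ≤ N ^ m * exp 1 ^ m / m ^ m := by
        rw [div_le_div_iff₀ (by positivity) (by positivity), mul_assoc]
        gcongr
    _ = (N * exp 1 / m) ^ m := by rw [div_pow, mul_pow]

theorem exp_one_le_two_rpow_three_halves : exp 1 ≤ (2 : ℝ) ^ (3 / 2 : ℝ) := by
  have hsq : ((2 : ℝ) ^ (3 / 2 : ℝ)) ^ 2 = 8 := by
    rw [← rpow_natCast, ← rpow_mul zero_le_two]; norm_num
  nlinarith [exp_one_lt_d9, exp_pos 1, rpow_pos_of_pos two_pos (3 / 2 : ℝ)]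

theorem two_pow_le_two_rpow {j : ℕ} {e : ℝ} (h : (j : ℝ) ≤ e) : (2 : ℝ) ^ j ≤ 2 ^ e := by
  rw [← rpow_natCast]
  exact rpow_le_rpow_of_exponent_le one_le_two h

theorem four_mul_le_two_rpow_sub {x t : ℝ} (hx : 16 ≤ x) (ht : t ≤ x / 2) :
    4 * x ≤ 2 ^ (x - t) := by
  -- Bernoulli for one factor `2 ^ (x / 4)`, the crude bound `16 ≤ 2 ^ (x / 4)` for the other
  have hlin : 1 + x / 4 ≤ (2 : ℝ) ^ (x / 4) := by
    simpa [mul_one, one_add_one_eq_two] using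
      one_add_mul_self_le_rpow_one_add (s := 1) (by norm_num) (p := x / 4) (by linarith)
  have h16 : (2 : ℝ) ^ (4 : ℕ) ≤ 2 ^ (x / 4) := two_pow_le_two_rpow (by push_cast; linarith)
  calc 4 * x ≤ 2 ^ (x / 4) * 2 ^ (x / 4) := by nlinarith
    _ = 2 ^ (x / 2) := by rw [← rpow_add two_pos]; ring_nf
    _ ≤ 2 ^ (x - t) := rpow_le_rpow_of_exponent_le one_le_two (by linarith)

section FactorBounds

variable {n : ℕ} {t : ℝ}

theorem choose_two_pow_ceil_le (hn : 16 ≤ (n : ℝ)) (ht : t ≤ n / 8) :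
    ((2 ^ n).choose ⌈(2 : ℝ) ^ ((n : ℝ) - t)⌉₊ : ℝ) ≤ 2 ^ ((n : ℝ) / 4 * 2 ^ ((n : ℝ) - t)) := by
  set a := (2 : ℝ) ^ ((n : ℝ) - t)
  set m := ⌈a⌉₊
  have ha : 4 * (n : ℝ) ≤ a := four_mul_le_two_rpow_sub hn (by linarith)
  have ham : a ≤ m := Nat.le_ceil a
  have hma : (m : ℝ) ≤ a + 1 := (Nat.ceil_lt_add_one (by positivity)).le
  have hm : (0 : ℝ) < m := by linarith
  have hratio : ((2 ^ n : ℕ) : ℝ) * exp 1 / m ≤ 2 ^ (t + 3 / 2) := by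
    have hsplit : ((2 ^ n : ℕ) : ℝ) = 2 ^ t * a := by
      rw [← rpow_add two_pos, add_sub_cancel, Nat.cast_pow, Nat.cast_ofNat, rpow_natCast]
    rw [div_le_iff₀ hm, rpow_add two_pos, hsplit]
    have := exp_one_le_two_rpow_three_halves
    have := rpow_pos_of_pos two_pos t
    calc 2 ^ t * a * exp 1 ≤ 2 ^ t * m * 2 ^ (3 / 2 : ℝ) := by gcongr
      _ = _ := by ring
  calc ((2 ^ n).choose m : ℝ) ≤ (((2 ^ n : ℕ) : ℝ) * exp 1 / m) ^ m :=
        Nat.choose_le_mul_exp_one_div_pow _ _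
    _ ≤ (2 ^ (t + 3 / 2) : ℝ) ^ m := by gcongr
    _ = 2 ^ ((t + 3 / 2) * m) := by rw [← rpow_natCast, ← rpow_mul zero_le_two]
    _ ≤ 2 ^ ((n : ℝ) / 4 * a) := by
        refine rpow_le_rpow_of_exponent_le one_le_two ?_
        calc (t + 3 / 2) * m ≤ (n / 8 + 3 / 2) * (a + 1) := by gcongr
          _ ≤ n / 4 * a := by nlinarith

theorem two_pow_pow_sub_ceil_le (ht : 0 ≤ t) :
    (((2 ^ n) ^ (2 ^ n - ⌈(2 : ℝ) ^ ((n : ℝ) - t)⌉₊) : ℕ) : ℝ) ≤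
      2 ^ ((n : ℝ) * 2 ^ (n : ℝ) - n * 2 ^ ((n : ℝ) - t)) := by
  set a := (2 : ℝ) ^ ((n : ℝ) - t)
  have hm : ⌈a⌉₊ ≤ 2 ^ n := by
    rw [Nat.ceil_le, Nat.cast_pow, Nat.cast_ofNat, ← rpow_natCast]
    exact rpow_le_rpow_of_exponent_le one_le_two (by linarith)
  rw [← pow_mul, Nat.cast_pow, Nat.cast_ofNat]
  refine two_pow_le_two_rpow ?_
  rw [rpow_natCast, Nat.cast_mul, Nat.cast_sub hm, Nat.cast_pow, Nat.cast_ofNat]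
  nlinarith [mul_le_mul_of_nonneg_left (Nat.le_ceil a) n.cast_nonneg]

end FactorBounds

theorem choose_pow_le {n k : ℕ} {a : ℝ} (ha : 4 * (n : ℝ) ≤ a) :
    ((n.choose k ^ n : ℕ) : ℝ) ≤ 2 ^ ((n : ℝ) / 4 * a) := by
  calc ((n.choose k ^ n : ℕ) : ℝ) ≤ (((2 ^ n) ^ n : ℕ) : ℝ) := by
        gcongr; exact Nat.choose_le_two_pow n k
    _ = 2 ^ (n * n) := by push_cast; rw [pow_mul]
    _ ≤ 2 ^ ((n : ℝ) / 4 * a) := two_pow_le_two_rpow (by push_cast; nlinarith)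

theorem two_pow_two_pow_pow_le {n k : ℕ} {x : ℝ} (hk : (k : ℝ) + 2 ≤ x) :
    (((2 ^ 2 ^ k) ^ n : ℕ) : ℝ) ≤ 2 ^ ((n : ℝ) / 4 * 2 ^ x) := by
  have h4 : (2 : ℝ) ^ k * 4 ≤ 2 ^ x := by
    calc (2 : ℝ) ^ k * 4 = 2 ^ (k + 2) := by ring
      _ ≤ 2 ^ x := two_pow_le_two_rpow (by push_cast; exact hk)
  rw [← pow_mul, Nat.cast_pow, Nat.cast_ofNat]
  refine two_pow_le_two_rpow ?_
  push_cast
  nlinarith [n.cast_nonneg (α := ℝ)]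

theorem two_rpow_cube_mul_two_rpow_lt {u a v : ℝ} (h : 0 < u * a) :
    ((2 : ℝ) ^ (u / 4 * a)) ^ 3 * 2 ^ (v - u * a) < 2 ^ v := by
  rw [← rpow_natCast, ← rpow_mul zero_le_two, ← rpow_add two_pos]
  exact rpow_lt_rpow_of_exponent_lt one_lt_two (by push_cast; linarith)

theorem stmt_17 (ε : ℝ) (hε : 0 < ε) (hε' : ε ≤ 1 / 8) (n : ℕ) (hn : 2 / ε ≤ n) :
    (Nat.card {f : (Fin n → Bool) → Fin n → Bool // ¬ IsRigidFunc n f (ε * n) (ε * n)} : ℝ)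
        ≤ ((2 : ℝ) ^ (((n : ℝ) / 4) * (2 : ℝ) ^ ((n : ℝ) - ε * n))) ^ 3 *
          (2 : ℝ) ^ ((n : ℝ) * (2 : ℝ) ^ (n : ℝ) - (n : ℝ) * (2 : ℝ) ^ ((n : ℝ) - ε * n)) ∧
    (Nat.card {f : (Fin n → Bool) → Fin n → Bool // ¬ IsRigidFunc n f (ε * n) (ε * n)} : ℝ)
        < (2 : ℝ) ^ ((n : ℝ) * (2 : ℝ) ^ (n : ℝ)) := by
  have hn16 : (16 : ℝ) ≤ n := le_trans (by rw [le_div_iff₀ hε]; linarith) hn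
  have hεn : ε * n ≤ n / 8 := by nlinarith
  have hεn0 : 0 ≤ ε * n := by positivity
  have hk : (⌊ε * n⌋₊ : ℝ) + 2 ≤ n - ε * n := by linarith [Nat.floor_le hεn0]
  have hkn : ⌊ε * n⌋₊ ≤ n := by exact_mod_cast (show (⌊ε * n⌋₊ : ℝ) ≤ n by linarith)
  set a : ℝ := 2 ^ ((n : ℝ) - ε * n)
  have ha : 4 * (n : ℝ) ≤ a := four_mul_le_two_rpow_sub hn16 (by linarith)
  have hcount :
      (Nat.card {f : (Fin n → Bool) → Fin n → Bool // ¬ IsRigidFunc n f (ε * n) (ε * n)} : ℝ)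
        ≤ ((2 : ℝ) ^ ((n : ℝ) / 4 * a)) ^ 3 * 2 ^ ((n : ℝ) * 2 ^ (n : ℝ) - n * a) := by
    calc _ ≤ (Nat.card (NonRigidCode n ⌈a⌉₊ ⌊ε * n⌋₊) : ℝ) := by
          exact_mod_cast card_not_isRigidFunc_le n _ _ hkn
      _ ≤ 2 ^ ((n : ℝ) / 4 * a) * 2 ^ ((n : ℝ) * 2 ^ (n : ℝ) - n * a) *
            (2 ^ ((n : ℝ) / 4 * a) * 2 ^ ((n : ℝ) / 4 * a)) := by
          rw [NonRigidCode.card_eq]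
          push_cast only [Nat.cast_mul]
          gcongr ?_ * ?_ * (?_ * ?_)
          · exact choose_two_pow_ceil_le hn16 hεn
          · exact two_pow_pow_sub_ceil_le hεn0
          · exact choose_pow_le ha
          · exact two_pow_two_pow_pow_le hk
      _ = _ := by ring
  exact ⟨hcount, hcount.trans_lt (two_rpow_cube_mul_two_rpow_lt (by positivity))⟩
end
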